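/- arXiv:2006.16781 — 2 statements merged into one kernel-verified Lean document; each statement's English description precedes it below -/
import Mathlib

section
/- Let Q₀ be an n × n nonzero positive semidefinite real matrix, a₀ ∈ Im(Q₀), b₀ ∈ ℝ, f(x) = ½ xᵀQ₀x + a₀ᵀx + b₀, let A be a q × n real matrix whose rows are linearly independent, and b ∈ ℝ^q. Then the dual function θ(λ) = inf_{x ∈ ℝⁿ} [ f(x) + λᵀ(Ax − b) ] is strongly concave on ℝ^q with constant of strong concavity λ_min(AAᵀ)/λ_max(Q₀) > 0 with respect to the Euclidean norm. In particular this holds even when Q₀ is not positive definite, i.e., when f is not strongly convex. -/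
/-!
Where `θ` is finite at `λ`, the linear term `a₀ + Aᵀλ` of the Lagrangian lies in the range of
`Q₀` (otherwise the Lagrangian is unbounded below along `ker Q₀`), say `a₀ + Aᵀλ = Q₀u`, and
completing the square gives `θ(λ) = b₀ - λᵀb - ½ uᵀQ₀u`. Along a segment `u` can be chosen affine
in `λ`, so the concavity defect of `θ` is exactly `t(1-t)/2 · δᵀQ₀δ` with `δ = u₁ - u₂`. Finally
`Q₀δ = Aᵀ(λ₁ - λ₂)` yields `λ_min(AAᵀ)‖λ₁ - λ₂‖² ≤ ‖Q₀δ‖² ≤ λ_max(Q₀) δᵀQ₀δ`.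
-/

open scoped Matrix

open Matrix

/-- The smallest eigenvalue of a Hermitian real matrix. -/
noncomputable def lambdaMin {q : ℕ} (M : Matrix (Fin q) (Fin q) ℝ)
    (hM : M.IsHermitian) : ℝ := ⨅ i, hM.eigenvalues i

section Spectral

variable {ι : Type*} [Fintype ι] [DecidableEq ι] {M : Matrix ι ι ℝ}

lemma Matrix.IsHermitian.eigenvectorBasis_dotProduct_mulVec (hM : M.IsHermitian) (j : ι)
    (x : ι → ℝ) :
    (hM.eigenvectorBasis j).ofLp ⬝ᵥ M *ᵥ x =
      hM.eigenvalues j * ((hM.eigenvectorBasis j).ofLp ⬝ᵥ x) := by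
  have hMt : Mᵀ = M := by simpa using hM.eq
  rw [dotProduct_mulVec, ← mulVec_transpose, hMt, hM.mulVec_eigenvectorBasis,
    smul_dotProduct, smul_eq_mul]

lemma Matrix.IsHermitian.dotProduct_eq_sum_eigenvectorBasis (hM : M.IsHermitian) (x y : ι → ℝ) :
    x ⬝ᵥ y = ∑ j, ((hM.eigenvectorBasis j).ofLp ⬝ᵥ x) * ((hM.eigenvectorBasis j).ofLp ⬝ᵥ y) := by
  have h := hM.eigenvectorBasis.sum_inner_mul_inner (WithLp.toLp 2 x) (WithLp.toLp 2 y)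
  simp only [EuclideanSpace.inner_eq_star_dotProduct, star_trivial] at h
  rw [dotProduct_comm, ← h]
  exact Finset.sum_congr rfl fun j _ => by rw [dotProduct_comm y]

lemma Matrix.IsHermitian.iInf_eigenvalues_mul_dotProduct_le (hM : M.IsHermitian) (x : ι → ℝ) :
    (⨅ i, hM.eigenvalues i) * (x ⬝ᵥ x) ≤ x ⬝ᵥ M *ᵥ x := by
  rw [hM.dotProduct_eq_sum_eigenvectorBasis x x, hM.dotProduct_eq_sum_eigenvectorBasis x,
    Finset.mul_sum]
  refine Finset.sum_le_sum fun j _ => ?_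
  rw [hM.eigenvectorBasis_dotProduct_mulVec]
  have hle : ⨅ i, hM.eigenvalues i ≤ hM.eigenvalues j := ciInf_le (Set.finite_range _).bddBelow j
  nlinarith [mul_self_nonneg ((hM.eigenvectorBasis j).ofLp ⬝ᵥ x)]

lemma Matrix.PosSemidef.mulVec_dotProduct_mulVec_le (hM : M.PosSemidef) (x : ι → ℝ) :
    M *ᵥ x ⬝ᵥ M *ᵥ x ≤ (⨆ i, hM.1.eigenvalues i) * (x ⬝ᵥ M *ᵥ x) := by
  rw [hM.1.dotProduct_eq_sum_eigenvectorBasis (M *ᵥ x), hM.1.dotProduct_eq_sum_eigenvectorBasis x,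
    Finset.mul_sum]
  refine Finset.sum_le_sum fun j _ => ?_
  simp only [hM.1.eigenvectorBasis_dotProduct_mulVec]
  have hle : hM.1.eigenvalues j ≤ ⨆ i, hM.1.eigenvalues i :=
    le_ciSup (Set.finite_range _).bddAbove j
  have h0 := hM.eigenvalues_nonneg j
  have := mul_nonneg (mul_nonneg (sub_nonneg.2 hle) h0)
    (mul_self_nonneg ((hM.1.eigenvectorBasis j).ofLp ⬝ᵥ x))
  nlinarith

lemma Matrix.PosSemidef.iSup_eigenvalues_pos (hM : M.PosSemidef) (hM0 : M ≠ 0) :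
    0 < ⨆ i, hM.1.eigenvalues i := by
  by_contra! h
  refine hM0 (hM.1.eigenvalues_eq_zero_iff.mp (funext fun i => ?_))
  exact le_antisymm ((le_ciSup (Set.finite_range _).bddAbove i).trans h) (hM.eigenvalues_nonneg i)

lemma Matrix.IsHermitian.exists_mulVec_eq_zero_dotProduct_ne_zero (hM : M.IsHermitian)
    {c : ι → ℝ} (hc : ∀ u, M *ᵥ u ≠ c) : ∃ w, M *ᵥ w = 0 ∧ c ⬝ᵥ w ≠ 0 := by
  by_contra! h
  have hrange : WithLp.toLp 2 c ∈ LinearMap.range M.toEuclideanLin := by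
    rw [← Submodule.orthogonal_orthogonal (LinearMap.range _),
      (isSymmetric_toEuclideanLin_iff.mpr hM).orthogonal_range]
    intro w hw
    have hMw : M *ᵥ w.ofLp = 0 := congrArg WithLp.ofLp hw
    simp [EuclideanSpace.inner_eq_star_dotProduct, h _ hMw]
  obtain ⟨u, hu⟩ := hrange
  exact hc u.ofLp (congrArg WithLp.ofLp hu)

end Spectral

section QuadraticInf

variable {ι : Type*} [Fintype ι] {Q : Matrix ι ι ℝ}

lemma dotProduct_mulVec_convexComb (u v : ι → ℝ) (t : ℝ) :
    (t • u + (1 - t) • v) ⬝ᵥ Q *ᵥ (t • u + (1 - t) • v) =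
      t * (u ⬝ᵥ Q *ᵥ u) + (1 - t) * (v ⬝ᵥ Q *ᵥ v) - t * (1 - t) * ((u - v) ⬝ᵥ Q *ᵥ (u - v)) := by
  simp only [mulVec_add, mulVec_sub, mulVec_smul, dotProduct_add, add_dotProduct, dotProduct_sub,
    sub_dotProduct, dotProduct_smul, smul_dotProduct, smul_eq_mul]
  ring

noncomputable def quadraticInf (Q : Matrix ι ι ℝ) (c : ι → ℝ) (d : ℝ) : EReal :=
  ⨅ x : ι → ℝ, ((1 / 2 * (x ⬝ᵥ Q *ᵥ x) + c ⬝ᵥ x + d : ℝ) : EReal)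

/-- Completing the square: the infimum is attained at `-u`. -/
lemma quadraticInf_of_mulVec_eq (hQ : Q.PosSemidef) {u c : ι → ℝ} (hu : Q *ᵥ u = c) (d : ℝ) :
    quadraticInf Q c d = ((d - 1 / 2 * (u ⬝ᵥ Q *ᵥ u) : ℝ) : EReal) := by
  have hQt : Qᵀ = Q := by simpa using hQ.1.eq
  have hsymm : ∀ x, u ⬝ᵥ Q *ᵥ x = c ⬝ᵥ x := fun x => by
    rw [dotProduct_mulVec, ← mulVec_transpose, hQt, hu]
  subst hu
  refine le_antisymm (iInf_le_of_le (-u) (le_of_eq ?_)) (le_iInf fun x => ?_)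
  · simp only [mulVec_neg, dotProduct_neg, neg_dotProduct, neg_neg, EReal.coe_eq_coe_iff]
    rw [dotProduct_comm]
    ring
  · have h := hQ.dotProduct_mulVec_nonneg (x + u)
    simp only [star_trivial, mulVec_add, dotProduct_add, add_dotProduct] at h
    rw [EReal.coe_le_coe_iff]
    have := hsymm x
    rw [dotProduct_comm (Q *ᵥ u)] at this ⊢
    linarith

lemma exists_mulVec_eq_of_quadraticInf_eq_coe [DecidableEq ι] (hQ : Q.IsHermitian) {c : ι → ℝ}
    {d r : ℝ} (h : quadraticInf Q c d = r) : ∃ u, Q *ᵥ u = c := by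
  by_contra! hc
  obtain ⟨w, hw, hcw⟩ := hQ.exists_mulVec_eq_zero_dotProduct_ne_zero hc
  -- along the kernel direction `w` the quadratic is affine with nonzero slope
  have hle := iInf_le (fun x : ι → ℝ => ((1 / 2 * (x ⬝ᵥ Q *ᵥ x) + c ⬝ᵥ x + d : ℝ) : EReal))
    (((r - 1 - d) / (c ⬝ᵥ w)) • w)
  rw [← quadraticInf, h, EReal.coe_le_coe_iff] at hle
  simp only [mulVec_smul, hw, smul_zero, dotProduct_zero, dotProduct_smul, smul_eq_mul,
    div_mul_cancel₀ _ hcw] at hle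
  linarith

lemma quadraticInf_convexComb (hQ : Q.PosSemidef) {u₁ u₂ c₁ c₂ : ι → ℝ} (hu₁ : Q *ᵥ u₁ = c₁)
    (hu₂ : Q *ᵥ u₂ = c₂) (d₁ d₂ t : ℝ) :
    quadraticInf Q (t • c₁ + (1 - t) • c₂) (t * d₁ + (1 - t) * d₂) =
      ((t * (d₁ - 1 / 2 * (u₁ ⬝ᵥ Q *ᵥ u₁)) + (1 - t) * (d₂ - 1 / 2 * (u₂ ⬝ᵥ Q *ᵥ u₂))
        + t * (1 - t) / 2 * ((u₁ - u₂) ⬝ᵥ Q *ᵥ (u₁ - u₂)) : ℝ) : EReal) := by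
  have hu : Q *ᵥ (t • u₁ + (1 - t) • u₂) = t • c₁ + (1 - t) • c₂ := by
    rw [mulVec_add, mulVec_smul, mulVec_smul, hu₁, hu₂]
  rw [quadraticInf_of_mulVec_eq hQ hu, dotProduct_mulVec_convexComb, EReal.coe_eq_coe_iff]
  ring

end QuadraticInf

lemma iInf_lagrangian_eq_quadraticInf {ι κ : Type*} [Fintype ι] [Fintype κ] (Q : Matrix ι ι ℝ)
    (a0 : ι → ℝ) (b0 : ℝ) (A : Matrix κ ι ℝ) (b lam : EuclideanSpace ℝ κ) :
    ⨅ x : EuclideanSpace ℝ ι, ((1 / 2 * (∑ i, x i * Q.mulVec x i) + (∑ i, a0 i * x i) + b0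
        + ∑ i, lam i * (A.mulVec x i - b i) : ℝ) : EReal) =
      quadraticInf Q (a0 + Aᵀ *ᵥ lam.ofLp) (b0 - lam.ofLp ⬝ᵥ b.ofLp) := by
  rw [quadraticInf, ← (WithLp.equiv 2 (ι → ℝ)).symm.iInf_comp]
  refine iInf_congr fun x => ?_
  simp only [WithLp.equiv_symm_apply]
  have hlin : ∑ i, lam i * ((A *ᵥ x) i - b i) = (Aᵀ *ᵥ lam.ofLp) ⬝ᵥ x - lam.ofLp ⬝ᵥ b.ofLp := by
    rw [mulVec_transpose, ← dotProduct_mulVec]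
    simp only [dotProduct, mul_sub, Finset.sum_sub_distrib]
  rw [EReal.coe_eq_coe_iff, hlin, add_dotProduct]
  simp only [dotProduct]
  ring

lemma lambdaMin_pos {q : ℕ} (hq : 0 < q) {M : Matrix (Fin q) (Fin q) ℝ} (hM : M.PosDef) :
    0 < lambdaMin M hM.1 := by
  have : Nonempty (Fin q) := ⟨⟨0, hq⟩⟩
  obtain ⟨i, hi⟩ := exists_eq_ciInf_of_finite (f := hM.1.eigenvalues)
  rw [lambdaMin, ← hi]
  exact hM.eigenvalues_pos i

lemma lambdaMin_mul_dotProduct_le {ι : Type*} [Fintype ι] [DecidableEq ι] {q : ℕ}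
    {Q : Matrix ι ι ℝ} (hQ : Q.PosSemidef) (A : Matrix (Fin q) ι ℝ) {δ : ι → ℝ} {μ : Fin q → ℝ}
    (h : Q *ᵥ δ = Aᵀ *ᵥ μ) :
    lambdaMin (A * Aᵀ) (isHermitian_mul_conjTranspose_self A) * (μ ⬝ᵥ μ) ≤
      (⨆ i, hQ.1.eigenvalues i) * (δ ⬝ᵥ Q *ᵥ δ) :=
  calc _ ≤ μ ⬝ᵥ (A * Aᵀ) *ᵥ μ := IsHermitian.iInf_eigenvalues_mul_dotProduct_le _ μ
    _ = Q *ᵥ δ ⬝ᵥ Q *ᵥ δ := by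
      rw [h, ← mulVec_mulVec, dotProduct_mulVec, ← mulVec_transpose]
    _ ≤ _ := hQ.mulVec_dotProduct_mulVec_le δ

theorem dual_function_of_quadratic_strongly_concave_general
    {n q : ℕ} (hq : 0 < q)
    (Q : Matrix (Fin n) (Fin n) ℝ)
    (hQ : Q.PosSemidef) (hQ0 : Q ≠ 0)
    (a0 : Fin n → ℝ) (b0 : ℝ)
    (f : EuclideanSpace ℝ (Fin n) → ℝ)
    (hf : f = fun x : EuclideanSpace ℝ (Fin n) => (1 / 2) * (∑ i, x i * Q.mulVec x i) + (∑ i, a0 i * x i) + b0)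
    (A : Matrix (Fin q) (Fin n) ℝ)
    (hA : LinearIndependent ℝ A)
    (b : EuclideanSpace ℝ (Fin q))
    (θ : EuclideanSpace ℝ (Fin q) → EReal)
    (hθ : θ = fun lam => ⨅ x : EuclideanSpace ℝ (Fin n),
      ((f x + ∑ i, lam i * (A.mulVec x i - b i) : ℝ) : EReal))
    (lamMax : ℝ) (hlamMax : lamMax = ⨆ i, hQ.1.eigenvalues i) :
    0 < lambdaMin (A * Aᵀ) (Matrix.isHermitian_mul_conjTranspose_self A) / lamMax ∧
    (∀ l1 l2 : EuclideanSpace ℝ (Fin q), ∀ r1 r2 : ℝ,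
      θ l1 = (r1 : EReal) → θ l2 = (r2 : EReal) →
      ∀ t : ℝ, 0 ≤ t → t ≤ 1 →
      ((t * r1 + (1 - t) * r2
        + (lambdaMin (A * Aᵀ) (Matrix.isHermitian_mul_conjTranspose_self A) / lamMax)
          * (t * (1 - t)) / 2 * ‖l1 - l2‖ ^ 2 : ℝ) : EReal)
        ≤ θ (t • l1 + (1 - t) • l2)) := by
  have hAAt : (A * Aᵀ).PosDef := .mul_conjTranspose_self A (vecMul_injective_iff.mpr hA)
  have hmax : 0 < lamMax := hlamMax ▸ hQ.iSup_eigenvalues_pos hQ0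
  refine ⟨div_pos (lambdaMin_pos hq hAAt) hmax, ?_⟩
  have hθQ : ∀ lam, θ lam = quadraticInf Q (a0 + Aᵀ *ᵥ lam.ofLp) (b0 - lam.ofLp ⬝ᵥ b.ofLp) :=
    fun lam => by subst hθ hf; exact iInf_lagrangian_eq_quadraticInf Q a0 b0 A b lam
  intro l1 l2 r1 r2 h1 h2 t ht0 ht1
  rw [hθQ] at h1 h2
  obtain ⟨u1, hu1⟩ := exists_mulVec_eq_of_quadraticInf_eq_coe hQ.1 h1
  obtain ⟨u2, hu2⟩ := exists_mulVec_eq_of_quadraticInf_eq_coe hQ.1 h2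
  rw [quadraticInf_of_mulVec_eq hQ hu1, EReal.coe_eq_coe_iff] at h1
  rw [quadraticInf_of_mulVec_eq hQ hu2, EReal.coe_eq_coe_iff] at h2
  have hδ : Q *ᵥ (u1 - u2) = Aᵀ *ᵥ (l1 - l2).ofLp := by
    rw [mulVec_sub, hu1, hu2, WithLp.ofLp_sub, mulVec_sub, add_sub_add_left_eq_sub]
  have hbound : lambdaMin (A * Aᵀ) (isHermitian_mul_conjTranspose_self A) / lamMax * ‖l1 - l2‖ ^ 2
      ≤ (u1 - u2) ⬝ᵥ Q *ᵥ (u1 - u2) := by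
    rw [EuclideanSpace.real_norm_sq_eq, div_mul_eq_mul_div, div_le_iff₀' hmax, hlamMax]
    simpa [dotProduct, sq] using lambdaMin_mul_dotProduct_le hQ A hδ
  have hc : a0 + Aᵀ *ᵥ (t • l1 + (1 - t) • l2).ofLp
      = t • (a0 + Aᵀ *ᵥ l1.ofLp) + (1 - t) • (a0 + Aᵀ *ᵥ l2.ofLp) := by
    simp only [WithLp.ofLp_add, WithLp.ofLp_smul, mulVec_add, mulVec_smul, smul_add]
    module
  have hd : b0 - (t • l1 + (1 - t) • l2).ofLp ⬝ᵥ b.ofLp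
      = t * (b0 - l1.ofLp ⬝ᵥ b.ofLp) + (1 - t) * (b0 - l2.ofLp ⬝ᵥ b.ofLp) := by
    simp only [WithLp.ofLp_add, WithLp.ofLp_smul, add_dotProduct, smul_dotProduct, smul_eq_mul]
    ring
  rw [hθQ, hc, hd, quadraticInf_convexComb hQ hu1 hu2, EReal.coe_le_coe_iff, ← h1, ← h2]
  have htt : 0 ≤ t * (1 - t) / 2 := div_nonneg (mul_nonneg ht0 (sub_nonneg.2 ht1)) zero_le_two
  linarith [mul_le_mul_of_nonneg_left hbound htt]

/-- For a convex quadratic `f(x) = ½xᵀQ₀x + a₀ᵀx + b₀` with `Q₀ ≠ 0`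
positive semidefinite (possibly not definite), `a₀ ∈ Im(Q₀)`, and `A` with linearly
independent rows, the dual function `θ(λ) = inf_x [f(x) + λᵀ(Ax − b)]` is strongly
concave on `ℝ^q` with constant `λ_min(AAᵀ)/λ_max(Q₀) > 0` (Euclidean norm). -/
theorem dual_function_of_quadratic_strongly_concave
    {n q : ℕ} (hq : 0 < q)
    (Q : Matrix (Fin n) (Fin n) ℝ)
    (hQ : Q.PosSemidef) (hQ0 : Q ≠ 0)
    (a0 : Fin n → ℝ) (ha0 : ∃ u : Fin n → ℝ, Q.mulVec u = a0) (b0 : ℝ)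
    (f : EuclideanSpace ℝ (Fin n) → ℝ)
    (hf : f = fun x : EuclideanSpace ℝ (Fin n) => (1 / 2) * (∑ i, x i * Q.mulVec x i) + (∑ i, a0 i * x i) + b0)
    (A : Matrix (Fin q) (Fin n) ℝ)
    (hA : LinearIndependent ℝ A)
    (b : EuclideanSpace ℝ (Fin q))
    (θ : EuclideanSpace ℝ (Fin q) → EReal)
    (hθ : θ = fun lam => ⨅ x : EuclideanSpace ℝ (Fin n),
      ((f x + ∑ i, lam i * (A.mulVec x i - b i) : ℝ) : EReal))
    (lamMax : ℝ) (hlamMax : lamMax = ⨆ i, hQ.1.eigenvalues i) :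
    0 < lambdaMin (A * Aᵀ) (Matrix.isHermitian_mul_conjTranspose_self A) / lamMax ∧
    (∀ l1 l2 : EuclideanSpace ℝ (Fin q), ∀ r1 r2 : ℝ,
      θ l1 = (r1 : EReal) → θ l2 = (r2 : EReal) →
      ∀ t : ℝ, 0 ≤ t → t ≤ 1 →
      ((t * r1 + (1 - t) * r2
        + (lambdaMin (A * Aᵀ) (Matrix.isHermitian_mul_conjTranspose_self A) / lamMax)
          * (t * (1 - t)) / 2 * ‖l1 - l2‖ ^ 2 : ℝ) : EReal)
        ≤ θ (t • l1 + (1 - t) • l2)) :=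
  dual_function_of_quadratic_strongly_concave_general hq Q hQ hQ0 a0 b0 f hf A hA b θ hθ lamMax
    hlamMax
end

section
/- Let f(x) = Σ_{k=1}^M α_k f_k(x) where α_k > 0 and each f_k : ℝⁿ → ℝ is convex and differentiable with ∇f_k Lipschitz continuous with constant L_k > 0 for the Euclidean norm on ℝⁿ. Let A be a q × n real matrix whose rows are linearly independent, and b ∈ ℝ^q. Then the dual function θ(λ) = inf_{x ∈ ℝⁿ} [ f(x) + λᵀ(Ax − b) ] is strongly concave on ℝ^q with constant of strong concavity λ_min(AAᵀ)/(Σ_{k=1}^M α_k L_k) with respect to the Euclidean norm. -/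
/-! Fix `x`. Moving `x` to `x + (1 - t) • d` in the Lagrangian at `l₁` and to `x - t • d` in the
Lagrangian at `l₂`, the descent lemma `f (x + d) ≤ f x + ⟪∇f x, d⟫ + L / 2 * ‖d‖ ^ 2` (with
`L = ∑ αₖ Lₖ` a Lipschitz constant of `∇f`) bounds the `t, 1 - t` combination of the two by the
Lagrangian at `(x, t • l₁ + (1 - t) • l₂)` plus `t (1 - t) (L / 2 ‖d‖² + ⟪Aᵀ(l₁ - l₂), d⟫)`: the
gradient terms cancel. The choice `d = -Aᵀ(l₁ - l₂) / L` turns the correction into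
`-t (1 - t) ‖Aᵀ(l₁ - l₂)‖² / (2L)`, and `‖Aᵀu‖² ≥ λ_min(AAᵀ) ‖u‖²`. Taking the infimum over `x`
gives strong concavity. -/

open scoped Matrix RealInnerProductSpace

theorem lambdaMin_mul_norm_sq_le_inner {q : ℕ} {M : Matrix (Fin q) (Fin q) ℝ} (hM : M.IsHermitian)
    (u : EuclideanSpace ℝ (Fin q)) :
    lambdaMin M hM * ‖u‖ ^ 2 ≤ ⟪M.toEuclideanLin u, u⟫ := by
  set b := hM.eigenvectorBasis
  have hb : ∀ i, ⟪M.toEuclideanLin u, b i⟫ = hM.eigenvalues i * ⟪u, b i⟫ := fun i => by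
    have hbi : M.toEuclideanLin (b i) = hM.eigenvalues i • b i := by
      ext j; simpa using congrFun (hM.mulVec_eigenvectorBasis i) j
    rw [(Matrix.isSymmetric_toEuclideanLin_iff.mpr hM) u (b i), hbi, real_inner_smul_right]
  calc lambdaMin M hM * ‖u‖ ^ 2 = ∑ i, lambdaMin M hM * ⟪u, b i⟫ ^ 2 := by
        rw [← b.sum_sq_inner_left, Finset.mul_sum]
    _ ≤ ∑ i, hM.eigenvalues i * ⟪u, b i⟫ ^ 2 := by
        gcongr with i
        exact ciInf_le (Set.finite_range _).bddBelow i
    _ = ⟪M.toEuclideanLin u, u⟫ := by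
        rw [← b.sum_inner_mul_inner]
        refine Finset.sum_congr rfl fun i _ => ?_
        rw [hb, real_inner_comm (b i)]; ring

theorem lambdaMin_mul_transpose_mul_norm_sq_le {n q : ℕ} (A : Matrix (Fin q) (Fin n) ℝ)
    (hM : (A * Aᵀ).IsHermitian) (u : EuclideanSpace ℝ (Fin q)) :
    lambdaMin (A * Aᵀ) hM * ‖u‖ ^ 2 ≤ ‖A.toEuclideanLin.adjoint u‖ ^ 2 := by
  have hAAt : ⟪(A * Aᵀ).toEuclideanLin u, u⟫ = ‖A.toEuclideanLin.adjoint u‖ ^ 2 := by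
    rw [← Matrix.conjTranspose_eq_transpose_of_trivial, Matrix.toLpLin_mul_same,
      LinearMap.comp_apply, ← LinearMap.adjoint_inner_right,
      Matrix.toEuclideanLin_conjTranspose_eq_adjoint, real_inner_self_eq_norm_sq]
  exact hAAt ▸ lambdaMin_mul_norm_sq_le_inner hM u

theorem sum_mul_mulVec_sub_eq_inner {n q : ℕ} (A : Matrix (Fin q) (Fin n) ℝ)
    (b l : EuclideanSpace ℝ (Fin q)) (x : EuclideanSpace ℝ (Fin n)) :
    ∑ i, l i * (A.mulVec x i - b i) = ⟪l, A.toEuclideanLin x - b⟫ := by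
  simp [PiLp.inner_apply, Matrix.toLpLin_apply, mul_comm]

section InnerProductSpace

variable {E : Type*} [NormedAddCommGroup E] [InnerProductSpace ℝ E]

theorem le_add_inner_add_sq_of_gradient_lipschitz [CompleteSpace E] {g : E → ℝ} {G : E → E}
    {L : ℝ} (hg : ∀ y, HasGradientAt g (G y) y) (hG : ∀ x y, ‖G y - G x‖ ≤ L * ‖y - x‖)
    (x d : E) :
    g (x + d) ≤ g x + ⟪G x, d⟫ + L / 2 * ‖d‖ ^ 2 := by
  set φ : ℝ → ℝ := fun s => g (x + s • d) - s * ⟪G x, d⟫ - L / 2 * s ^ 2 * ‖d‖ ^ 2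
  have hφ : ∀ s, HasDerivAt φ (⟪G (x + s • d), d⟫ - ⟪G x, d⟫ - L * s * ‖d‖ ^ 2) s := by
    intro s
    have hline : HasDerivAt (fun s : ℝ => x + s • d) d s := by
      simpa using ((hasDerivAt_id s).smul_const d).const_add x
    have hcomp : HasDerivAt (fun s : ℝ => g (x + s • d)) ⟪G (x + s • d), d⟫ s := by
      simpa [Function.comp_def] using (hg (x + s • d)).hasFDerivAt.comp_hasDerivAt s hline
    exact ((hcomp.fun_sub ((hasDerivAt_id s).mul_const ⟪G x, d⟫)).fun_sub
      (((hasDerivAt_pow 2 s).const_mul (L / 2)).mul_const (‖d‖ ^ 2))).congr_deriv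
      (by push_cast; ring)
  have hφ' : ∀ s ∈ interior (Set.Ici (0 : ℝ)),
      ⟪G (x + s • d), d⟫ - ⟪G x, d⟫ - L * s * ‖d‖ ^ 2 ≤ 0 := by
    intro s hs
    rw [interior_Ici] at hs
    calc ⟪G (x + s • d), d⟫ - ⟪G x, d⟫ - L * s * ‖d‖ ^ 2
        = ⟪G (x + s • d) - G x, d⟫ - L * s * ‖d‖ ^ 2 := by rw [inner_sub_left]
      _ ≤ ‖G (x + s • d) - G x‖ * ‖d‖ - L * s * ‖d‖ ^ 2 := by
        gcongr; exact real_inner_le_norm _ _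
      _ ≤ L * ‖(x + s • d) - x‖ * ‖d‖ - L * s * ‖d‖ ^ 2 := by
        gcongr; exact hG _ _
      _ = 0 := by
        rw [add_sub_cancel_left, norm_smul, Real.norm_of_nonneg hs.le]; ring
  have hanti : AntitoneOn φ (Set.Ici 0) :=
    antitoneOn_of_hasDerivWithinAt_nonpos (convex_Ici 0)
      (fun s _ => (hφ s).continuousAt.continuousWithinAt)
      (fun s _ => (hφ s).hasDerivWithinAt) hφ'
  have h01 : φ 1 ≤ φ 0 := hanti Set.self_mem_Ici (Set.mem_Ici.mpr zero_le_one) zero_le_one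
  have hφ0 : φ 0 = g x := by simp [φ]
  have hφ1 : φ 1 = g (x + d) - ⟪G x, d⟫ - L / 2 * ‖d‖ ^ 2 := by simp [φ]
  linarith

theorem HasGradientAt.fun_sum_mul [CompleteSpace E] {ι : Type*} {s : Finset ι} {g : ι → E → ℝ}
    {G : ι → E} {x : E} (a : ι → ℝ) (hg : ∀ k ∈ s, HasGradientAt (g k) (G k) x) :
    HasGradientAt (fun y => ∑ k ∈ s, a k * g k y) (∑ k ∈ s, a k • G k) x := by
  rw [hasGradientAt_iff_hasFDerivAt, map_sum]
  simp_rw [map_smul]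
  exact HasFDerivAt.fun_sum fun k hk => (hg k hk).hasFDerivAt.const_mul (a k)

theorem norm_sum_smul_sub_sum_smul_le {ι : Type*} {s : Finset ι} {a L : ι → ℝ} {u v : ι → E}
    {r : ℝ} (ha : ∀ k ∈ s, 0 ≤ a k) (huv : ∀ k ∈ s, ‖u k - v k‖ ≤ L k * r) :
    ‖∑ k ∈ s, a k • u k - ∑ k ∈ s, a k • v k‖ ≤ (∑ k ∈ s, a k * L k) * r := by
  rw [← Finset.sum_sub_distrib, Finset.sum_mul]
  refine (norm_sum_le _ _).trans (Finset.sum_le_sum fun k hk => ?_)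
  rw [← smul_sub, norm_smul, Real.norm_of_nonneg (ha k hk), mul_assoc]
  exact mul_le_mul_of_nonneg_left (huv k hk) (ha k hk)

variable {F : Type*} [NormedAddCommGroup F] [InnerProductSpace ℝ F]

def lagrangian (f : E → ℝ) (T : E →ₗ[ℝ] F) (b : F) (x : E) (l : F) : ℝ :=
  f x + ⟪l, T x - b⟫

noncomputable def dualFunction (f : E → ℝ) (T : E →ₗ[ℝ] F) (b : F) (l : F) : EReal :=
  ⨅ x, (lagrangian f T b x l : EReal)

theorem dualFunction_le_lagrangian (f : E → ℝ) (T : E →ₗ[ℝ] F) (b : F) (x : E) (l : F) :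
    dualFunction f T b l ≤ lagrangian f T b x l :=
  iInf_le _ x

theorem lagrangian_smul_add_one_sub_smul (f : E → ℝ) (T : E →ₗ[ℝ] F) (b : F) (x : E) (l₁ l₂ : F)
    (t : ℝ) :
    lagrangian f T b x (t • l₁ + (1 - t) • l₂) =
      t * lagrangian f T b x l₁ + (1 - t) * lagrangian f T b x l₂ := by
  simp only [lagrangian, inner_add_left, real_inner_smul_left]
  ring

-- `d = -L⁻¹ • w` minimises `L / 2 * ‖d‖ ^ 2 + ⟪w, d⟫`; at `L = 0` both sides are `0`, as `0⁻¹ = 0`.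
theorem div_two_mul_norm_sq_add_inner_neg_inv_smul (L : ℝ) (w : E) :
    L / 2 * ‖-L⁻¹ • w‖ ^ 2 + ⟪w, -L⁻¹ • w⟫ = -(‖w‖ ^ 2 / (2 * L)) := by
  rw [norm_smul, real_inner_smul_right, real_inner_self_eq_norm_sq, mul_pow, Real.norm_eq_abs,
    sq_abs]
  rcases eq_or_ne L 0 with rfl | hL
  · simp
  · field_simp
    ring

variable [FiniteDimensional ℝ E] [FiniteDimensional ℝ F]

theorem lagrangian_add_smul_le {f : E → ℝ} {G : E → E} {L : ℝ}
    (hf : ∀ y, HasGradientAt f (G y) y) (hG : ∀ x y, ‖G y - G x‖ ≤ L * ‖y - x‖)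
    (T : E →ₗ[ℝ] F) (b : F) (x d : E) (l : F) (s : ℝ) :
    lagrangian f T b (x + s • d) l ≤
      lagrangian f T b x l + s * (⟪G x, d⟫ + ⟪T.adjoint l, d⟫) + L / 2 * s ^ 2 * ‖d‖ ^ 2 := by
  have hdescent := le_add_inner_add_sq_of_gradient_lipschitz hf hG x (s • d)
  rw [real_inner_smul_right, norm_smul, mul_pow, Real.norm_eq_abs, sq_abs] at hdescent
  have hT : ⟪l, T (x + s • d) - b⟫ = ⟪l, T x - b⟫ + s * ⟪T.adjoint l, d⟫ := by
    rw [map_add, map_smul, add_sub_right_comm, inner_add_right, real_inner_smul_right,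
      LinearMap.adjoint_inner_left]
  simp only [lagrangian, hT]
  linarith

theorem convex_combination_lagrangian_shift_le {f : E → ℝ} {G : E → E} {L : ℝ}
    (hf : ∀ y, HasGradientAt f (G y) y) (hG : ∀ x y, ‖G y - G x‖ ≤ L * ‖y - x‖)
    (T : E →ₗ[ℝ] F) (b : F) (x d : E) (l₁ l₂ : F) {t : ℝ} (ht₀ : 0 ≤ t) (ht₁ : t ≤ 1) :
    t * lagrangian f T b (x + (1 - t) • d) l₁ + (1 - t) * lagrangian f T b (x - t • d) l₂ ≤
      lagrangian f T b x (t • l₁ + (1 - t) • l₂) +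
        t * (1 - t) * (L / 2 * ‖d‖ ^ 2 + ⟪T.adjoint (l₁ - l₂), d⟫) := by
  have h₁ := lagrangian_add_smul_le hf hG T b x d l₁ (1 - t)
  have h₂ := lagrangian_add_smul_le hf hG T b x d l₂ (-t)
  rw [neg_smul, ← sub_eq_add_neg] at h₂
  rw [lagrangian_smul_add_one_sub_smul, map_sub, inner_sub_left]
  linarith [mul_le_mul_of_nonneg_left h₁ ht₀, mul_le_mul_of_nonneg_left h₂ (sub_nonneg.mpr ht₁)]

theorem dualFunction_strongly_concave {f : E → ℝ} {G : E → E} {L : ℝ}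
    (hf : ∀ y, HasGradientAt f (G y) y) (hG : ∀ x y, ‖G y - G x‖ ≤ L * ‖y - x‖)
    (T : E →ₗ[ℝ] F) (b : F) {l₁ l₂ : F} {r₁ r₂ : ℝ} (h₁ : dualFunction f T b l₁ = r₁)
    (h₂ : dualFunction f T b l₂ = r₂) {t : ℝ} (ht₀ : 0 ≤ t) (ht₁ : t ≤ 1) :
    ((t * r₁ + (1 - t) * r₂ + t * (1 - t) / (2 * L) * ‖T.adjoint (l₁ - l₂)‖ ^ 2 : ℝ) : EReal) ≤
      dualFunction f T b (t • l₁ + (1 - t) • l₂) := by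
  refine le_iInf fun x => EReal.coe_le_coe_iff.mpr ?_
  set d := -L⁻¹ • T.adjoint (l₁ - l₂)
  have hr₁ : r₁ ≤ lagrangian f T b (x + (1 - t) • d) l₁ :=
    EReal.coe_le_coe_iff.mp (h₁ ▸ dualFunction_le_lagrangian f T b _ l₁)
  have hr₂ : r₂ ≤ lagrangian f T b (x - t • d) l₂ :=
    EReal.coe_le_coe_iff.mp (h₂ ▸ dualFunction_le_lagrangian f T b _ l₂)
  have hpert := convex_combination_lagrangian_shift_le hf hG T b x d l₁ l₂ ht₀ ht₁
  rw [div_two_mul_norm_sq_add_inner_neg_inv_smul, mul_neg, ← mul_div_assoc,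
    ← div_mul_eq_mul_div] at hpert
  linarith [mul_le_mul_of_nonneg_left hr₁ ht₀, mul_le_mul_of_nonneg_left hr₂ (sub_nonneg.mpr ht₁)]

end InnerProductSpace

theorem dual_function_of_sum_strongly_concave_general
    {n q M : ℕ}
    (a : Fin M → ℝ) (ha : ∀ k, 0 < a k)
    (fk : Fin M → EuclideanSpace ℝ (Fin n) → ℝ)
    (fk' : Fin M → EuclideanSpace ℝ (Fin n) → EuclideanSpace ℝ (Fin n))
    (hdiff : ∀ k x, HasGradientAt (fk k) (fk' k x) x)
    (Lk : Fin M → ℝ) (hLk : ∀ k, 0 < Lk k)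
    (hLip : ∀ k x y, ‖fk' k y - fk' k x‖ ≤ Lk k * ‖y - x‖)
    (f : EuclideanSpace ℝ (Fin n) → ℝ)
    (hf : f = fun x => ∑ k, a k * fk k x)
    (A : Matrix (Fin q) (Fin n) ℝ)
    (b : EuclideanSpace ℝ (Fin q))
    (θ : EuclideanSpace ℝ (Fin q) → EReal)
    (hθ : θ = fun lam => ⨅ x : EuclideanSpace ℝ (Fin n),
      ((f x + ∑ i, lam i * (A.mulVec x i - b i) : ℝ) : EReal)) :
    ∀ l1 l2 : EuclideanSpace ℝ (Fin q), ∀ r1 r2 : ℝ,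
      θ l1 = (r1 : EReal) → θ l2 = (r2 : EReal) →
      ∀ t : ℝ, 0 ≤ t → t ≤ 1 →
      ((t * r1 + (1 - t) * r2
        + (lambdaMin (A * Aᵀ) (Matrix.isHermitian_mul_conjTranspose_self A)
            / (∑ k, a k * Lk k))
          * (t * (1 - t)) / 2 * ‖l1 - l2‖ ^ 2 : ℝ) : EReal)
        ≤ θ (t • l1 + (1 - t) • l2) := by
  intro l1 l2 r1 r2 h1 h2 t ht0 ht1
  set L := ∑ k, a k * Lk k
  have hθ' : θ = dualFunction f A.toEuclideanLin b := by
    simp only [hθ, sum_mul_mulVec_sub_eq_inner]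
    rfl
  have hgrad : ∀ x, HasGradientAt f (∑ k, a k • fk' k x) x := fun x =>
    hf ▸ HasGradientAt.fun_sum_mul a fun k _ => hdiff k x
  have hlip : ∀ x y, ‖∑ k, a k • fk' k y - ∑ k, a k • fk' k x‖ ≤ L * ‖y - x‖ := fun x y =>
    norm_sum_smul_sub_sum_smul_le (fun k _ => (ha k).le) fun k _ => hLip k x y
  have hL : 0 ≤ L := Finset.sum_nonneg fun k _ => (mul_pos (ha k) (hLk k)).le
  rw [hθ'] at h1 h2 ⊢
  refine le_trans (EReal.coe_le_coe_iff.mpr ?_)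
    (dualFunction_strongly_concave hgrad hlip _ b h1 h2 ht0 ht1)
  set c := lambdaMin (A * Aᵀ) (Matrix.isHermitian_mul_conjTranspose_self A)
  have hray : c * ‖l1 - l2‖ ^ 2 ≤ ‖A.toEuclideanLin.adjoint (l1 - l2)‖ ^ 2 :=
    lambdaMin_mul_transpose_mul_norm_sq_le A _ (l1 - l2)
  have hcoef : 0 ≤ t * (1 - t) / (2 * L) := by
    have := sub_nonneg.mpr ht1
    positivity
  calc _ = t * r1 + (1 - t) * r2 + t * (1 - t) / (2 * L) * (c * ‖l1 - l2‖ ^ 2) := by ring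
    _ ≤ _ := by gcongr

/-- If `f = Σₖ αₖ fₖ` with `αₖ > 0` and each `fₖ` convex,
differentiable with `Lₖ`-Lipschitz gradient (`Lₖ > 0`), and `A` has linearly
independent rows, then the dual function is strongly concave on `ℝ^q` with
constant `λ_min(AAᵀ)/(Σₖ αₖLₖ)` (Euclidean norm). -/
theorem dual_function_of_sum_strongly_concave
    {n q M : ℕ}
    (a : Fin M → ℝ) (ha : ∀ k, 0 < a k)
    (fk : Fin M → EuclideanSpace ℝ (Fin n) → ℝ)
    (fk' : Fin M → EuclideanSpace ℝ (Fin n) → EuclideanSpace ℝ (Fin n))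
    (hconv : ∀ k, ConvexOn ℝ Set.univ (fk k))
    (hdiff : ∀ k x, HasGradientAt (fk k) (fk' k x) x)
    (Lk : Fin M → ℝ) (hLk : ∀ k, 0 < Lk k)
    (hLip : ∀ k x y, ‖fk' k y - fk' k x‖ ≤ Lk k * ‖y - x‖)
    (f : EuclideanSpace ℝ (Fin n) → ℝ)
    (hf : f = fun x => ∑ k, a k * fk k x)
    (A : Matrix (Fin q) (Fin n) ℝ)
    (hA : LinearIndependent ℝ A)
    (b : EuclideanSpace ℝ (Fin q))
    (θ : EuclideanSpace ℝ (Fin q) → EReal)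
    (hθ : θ = fun lam => ⨅ x : EuclideanSpace ℝ (Fin n),
      ((f x + ∑ i, lam i * (A.mulVec x i - b i) : ℝ) : EReal)) :
    ∀ l1 l2 : EuclideanSpace ℝ (Fin q), ∀ r1 r2 : ℝ,
      θ l1 = (r1 : EReal) → θ l2 = (r2 : EReal) →
      ∀ t : ℝ, 0 ≤ t → t ≤ 1 →
      ((t * r1 + (1 - t) * r2
        + (lambdaMin (A * Aᵀ) (Matrix.isHermitian_mul_conjTranspose_self A)
            / (∑ k, a k * Lk k))
          * (t * (1 - t)) / 2 * ‖l1 - l2‖ ^ 2 : ℝ) : EReal)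
        ≤ θ (t • l1 + (1 - t) • l2) :=
  dual_function_of_sum_strongly_concave_general a ha fk fk' hdiff Lk hLk hLip f hf A b θ hθ
end
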